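/- If the incentivized cost θ_i ↦ ℓ_i(f(θ_i,θ_{-i}), θ_i, u_i(θ_i,θ_{-i})) (as a function of the true/reported type θ_i) is concave and differentiable on [0,1] with derivative at every θ_i equal to x_i(f(θ_i,θ_{-i})) - y_i(f(θ_i,θ_{-i})), then the mechanism is incentive compatible: for all θ_i, θ̂_i ∈ [0,1], c_i(f(θ_i,θ_{-i}),θ_i) - u_i(θ_i,θ_{-i}) f_i(θ_i,θ_{-i}) ≤ c_i(f(θ̂_i,θ_{-i}),θ_i) - u_i(θ̂_i,θ_{-i}) f_i(θ̂_i,θ_{-i}). -/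
import Mathlib

open Set

lemma tangent_aux {V : ℝ → ℝ} {S : Set ℝ} (hconc : ConcaveOn ℝ S V)
    {θ θh d : ℝ} (hθ : θ ∈ S) (hθh : θh ∈ S)
    (hd : HasDerivWithinAt V d S θh) :
    V θ ≤ V θh + (θ - θh) * d := by
  rcases lt_trichotomy θ θh with h | h | h
  · have := hconc.le_slope_of_hasDerivWithinAt hθ hθh h hd
    rw [slope_def_field, le_div_iff₀ (by linarith)] at this
    nlinarith
  · simp [h]
  · have := hconc.slope_le_of_hasDerivWithinAt hθh hθ h hd
    rw [slope_def_field, div_le_iff₀ (by linarith)] at this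
    nlinarith

/-- Sufficiency in Proposition 2: if the value function
V(θ_i) = ℓ_i(f(θ_i,θ_{-i}), θ_i, u_i(θ_i,θ_{-i})) is concave on [0,1] with derivative
x_i(f(θ_i,θ_{-i})) - y_i(f(θ_i,θ_{-i})), then the mechanism is incentive compatible. -/
theorem stmt_9 (n : ℕ) (i : Fin n) (x y : (Fin n → ℝ) → ℝ)
    (F : ℝ → (Fin n → ℝ)) (U : ℝ → ℝ)
    (c : (Fin n → ℝ) → ℝ → ℝ)
    (hc : ∀ a t, c a t = t * x a + (1 - t) * y a)
    (V : ℝ → ℝ)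
    (hV : ∀ t, V t = c (F t) t - U t * F t i)
    (hconc : ConcaveOn ℝ (Icc (0:ℝ) 1) V)
    (hderiv : ∀ t ∈ Icc (0:ℝ) 1,
      HasDerivWithinAt V (x (F t) - y (F t)) (Icc (0:ℝ) 1) t) :
    ∀ θ ∈ Icc (0:ℝ) 1, ∀ θh ∈ Icc (0:ℝ) 1,
      c (F θ) θ - U θ * F θ i ≤ c (F θh) θ - U θh * F θh i := by
  intro θ hθ θh hθh
  have key := tangent_aux hconc hθ hθh (hderiv θh hθh)
  have h1 := hV θ
  have h2 := hV θh
  have h3 := hc (F θh) θ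
  have h4 := hc (F θh) θh
  nlinarith [key, h1, h2, h3, h4]
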